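/- arXiv:1808.01450 — 3 statements merged into one kernel-verified Lean document; each statement's English description precedes it below -/
import Mathlib

section
/- Let {G_n}_{n∈ω} be a tower of topological groups and G := ⋃_{n∈ω} G_n. Then: (a) τ_BS ⊆ τ_ind; (b) in both (G, τ_ind) and (G, τ_BS) the inversion map is continuous and multiplication is separately continuous (they are quasitopological groups); (c) τ_gr ⊆ τ_BS, i.e., the identity map (G, τ_BS) → glim G_n is continuous; consequently, if τ_BS is a group topology on G, then τ_BS = τ_gr, i.e., (G, τ_BS) = glim G_n. -/
open Topology Filter Set Pointwise

/-- The finite product `U k · U (k+1) ⋯ U (k+j)` of a sequence of subsets of a group. -/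
def bsProd {G : Type*} [Group G] (U : ℕ → Set G) (k : ℕ) : ℕ → Set G
  | 0 => U k
  | j + 1 => bsProd U k j * U (k + (j + 1))

/-- `U⁺[k] = ⋃_{n ≥ k} U k · U (k+1) ⋯ U n`. -/
def bsPlus {G : Type*} [Group G] (U : ℕ → Set G) (k : ℕ) : Set G :=
  ⋃ j, bsProd U k j

/-- The Bamboo-Shoot set `U[k] = (U⁺[k])⁻¹ · U⁺[k]`. -/
def bsU {G : Type*} [Group G] (U : ℕ → Set G) (k : ℕ) : Set G :=
  (bsPlus U k)⁻¹ * bsPlus U k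

/-- A tower of topological groups inside an ambient (abstract) group `G`:
an increasing sequence of subgroups covering `G`, each carrying its own group topology,
such that all inclusions `G_n → G_{n+1}` are continuous. -/
structure GroupTower (G : Type*) [Group G] where
  H : ℕ → Subgroup G
  τ : ∀ n, TopologicalSpace (H n)
  topGroup : ∀ n, @IsTopologicalGroup (H n) (τ n) _
  mono : ∀ n, H n ≤ H (n + 1)
  union : ∀ g : G, ∃ n, g ∈ H n
  incl_cont : ∀ n, Continuous[τ n, τ (n + 1)] (Subgroup.inclusion (mono n))

namespace GroupTower

variable {G : Type*} [Group G]

/-- The tower is closed: each `G_n` carries the subspace topology from `G_{n+1}`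
and is closed in `G_{n+1}`. -/
def IsClosedTower (T : GroupTower G) : Prop :=
  ∀ n, T.τ n = (T.τ (n + 1)).induced (Subgroup.inclusion (T.mono n)) ∧
    IsClosed[T.τ (n + 1)] (Set.range (Subgroup.inclusion (T.mono n)))

/-- `U` (viewed as a subset of the ambient group) is an open symmetric neighborhood of
the identity in `G_n`. -/
def NsMem (T : GroupTower G) (n : ℕ) (U : Set G) : Prop :=
  U ⊆ (T.H n : Set G) ∧ IsOpen[T.τ n] (((↑) : T.H n → G) ⁻¹' U) ∧ (1 : G) ∈ U ∧ U⁻¹ = U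

/-- The Group Condition (GC). -/
def GC (T : GroupTower G) : Prop :=
  ∀ U : ℕ → Set G, (∀ n, T.NsMem n (U n)) → ∀ k : ℕ,
    ∃ V : ℕ → Set G, (∀ n, T.NsMem n (V n)) ∧ bsU V k ⊆ bsPlus U k

/-- `τBS` is the Bamboo-Shoot topology of the tower: at every point `g` the sets
`g • U[k]` form a neighborhood base. -/
def IsBambooShoot (T : GroupTower G) (τBS : TopologicalSpace G) : Prop :=
  ∀ g : G, (@nhds G τBS g).HasBasis
    (fun p : (ℕ → Set G) × ℕ => ∀ n, T.NsMem n (p.1 n))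
    (fun p => g • bsU p.1 p.2)

/-- `τind` is the inductive limit topology of the tower in the category of topological
spaces: a set is open iff its trace on every `G_n` is open. -/
def IsIndTop (T : GroupTower G) (τind : TopologicalSpace G) : Prop :=
  ∀ A : Set G, IsOpen[τind] A ↔ ∀ n, IsOpen[T.τ n] (((↑) : T.H n → G) ⁻¹' A)

/-- `t` is a group topology on `G` making all the inclusions `G_n → G` continuous. -/
def IsCompatGroupTopology (T : GroupTower G) (t : TopologicalSpace G) : Prop :=
  @IsTopologicalGroup G t _ ∧ ∀ n, Continuous[T.τ n, t] ((↑) : T.H n → G)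

/-- `t` coincides with `τ_gr`, i.e. `(G, t) = glim G_n` : `t` is a group topology making
all inclusions continuous, and it is the finest such topology (every open set of any
such topology is `t`-open). -/
def IsGLim (T : GroupTower G) (t : TopologicalSpace G) : Prop :=
  T.IsCompatGroupTopology t ∧
    ∀ t' : TopologicalSpace G, T.IsCompatGroupTopology t' →
      ∀ A : Set G, IsOpen[t'] A → IsOpen[t] A

end GroupTower

/-- A topological space is Ascoli if every compact subset of `C_k(X, ℝ)` is
equicontinuous. -/
def IsAscoliSpace (X : Type*) [TopologicalSpace X] : Prop :=
  ∀ K : Set C(X, ℝ), IsCompact K → Equicontinuous fun f : K => (f.1 : X → ℝ)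

/-- A family of sets is a k-network. -/
def IsKNetwork {X : Type*} [TopologicalSpace X] (N : Set (Set X)) : Prop :=
  ∀ K U : Set X, IsCompact K → IsOpen U → K ⊆ U →
    ∃ F : Set (Set X), F ⊆ N ∧ F.Finite ∧ K ⊆ ⋃₀ F ∧ ⋃₀ F ⊆ U

/-- A family of sets is locally finite. -/
def IsLocallyFiniteFamily {X : Type*} [TopologicalSpace X] (N : Set (Set X)) : Prop :=
  ∀ x : X, ∃ V ∈ 𝓝 x, {s ∈ N | (s ∩ V).Nonempty}.Finite

/-- An ℵ-space: a regular space with a σ-locally finite k-network. -/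
def IsAlephSpace (X : Type*) [TopologicalSpace X] : Prop :=
  RegularSpace X ∧ ∃ N : ℕ → Set (Set X),
    (∀ n, IsLocallyFiniteFamily (N n)) ∧ IsKNetwork (⋃ n, N n)

/-- An ℵ₀-space: a regular space with a countable k-network. -/
def IsAleph0Space (X : Type*) [TopologicalSpace X] : Prop :=
  RegularSpace X ∧ ∃ N : Set (Set X), N.Countable ∧ IsKNetwork N

/-- A k_ω-space. -/
def IsKOmegaSpace (X : Type*) [TopologicalSpace X] : Prop :=
  ∃ K : ℕ → Set X, (∀ n, IsCompact (K n)) ∧ (∀ n, K n ⊆ K (n + 1)) ∧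
    (⋃ n, K n) = Set.univ ∧
    ∀ A : Set X, IsClosed A ↔ ∀ n, IsClosed (((↑) : K n → X) ⁻¹' A)

/-- An MK_ω-space: a k_ω-space witnessed by metrizable compact sets. -/
def IsMKOmegaSpace (X : Type*) [TopologicalSpace X] : Prop :=
  ∃ K : ℕ → Set X, (∀ n, IsCompact (K n)) ∧
    (∀ n, TopologicalSpace.MetrizableSpace (K n)) ∧ (∀ n, K n ⊆ K (n + 1)) ∧
    (⋃ n, K n) = Set.univ ∧
    ∀ A : Set X, IsClosed A ↔ ∀ n, IsClosed (((↑) : K n → X) ⁻¹' A)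


section BsAux
variable {G : Type*} [Group G] {U V W : ℕ → Set G} {k j m : ℕ}

lemma bsProd_cons (U : ℕ → Set G) (k j : ℕ) :
    bsProd U k (j + 1) = U k * bsProd U (k + 1) j := by
  induction j with
  | zero => rfl
  | succ j ih =>
    show bsProd U k (j+1) * U (k + (j+2)) = U k * (bsProd U (k+1) j * U (k+1+(j+1)))
    rw [ih, mul_assoc]
    have : k + (j + 2) = k + 1 + (j + 1) := by omega
    rw [this]

lemma one_mem_bsProd (h1 : ∀ n, (1:G) ∈ U n) (k : ℕ) : ∀ j, (1:G) ∈ bsProd U k j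
  | 0 => h1 k
  | j + 1 => by
    have := Set.mul_mem_mul (one_mem_bsProd h1 k j) (h1 (k + (j+1)))
    simpa [bsProd] using this

lemma subset_bsProd (h1 : ∀ n, (1:G) ∈ U n) (k : ℕ) : ∀ j, U (k + j) ⊆ bsProd U k j
  | 0 => by simp [bsProd]
  | j + 1 => fun x hx => by
    have := Set.mul_mem_mul (one_mem_bsProd h1 k j) hx
    simpa [bsProd] using this

lemma one_mem_bsPlus (h1 : ∀ n, (1:G) ∈ U n) (k : ℕ) : (1:G) ∈ bsPlus U k :=
  Set.mem_iUnion.2 ⟨0, h1 k⟩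

lemma bsPlus_subset_bsU (h1 : ∀ n, (1:G) ∈ U n) (k : ℕ) : bsPlus U k ⊆ bsU U k := by
  intro x hx
  have h : (1:G) ∈ (bsPlus U k)⁻¹ := by
    rw [Set.mem_inv]; simpa using one_mem_bsPlus h1 k
  simpa [bsU] using Set.mul_mem_mul h hx

lemma one_mem_bsU (h1 : ∀ n, (1:G) ∈ U n) (k : ℕ) : (1:G) ∈ bsU U k :=
  bsPlus_subset_bsU h1 k (one_mem_bsPlus h1 k)

lemma subset_bsU (h1 : ∀ n, (1:G) ∈ U n) (k j : ℕ) : U (k + j) ⊆ bsU U k :=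
  (subset_bsProd h1 k j).trans <|
    (Set.subset_iUnion _ j).trans (bsPlus_subset_bsU h1 k)

lemma bsU_inv (U : ℕ → Set G) (k : ℕ) : (bsU U k)⁻¹ = bsU U k := by
  unfold bsU
  rw [mul_inv_rev, inv_inv]

lemma bsProd_mono (h : ∀ n, V n ⊆ U n) (k : ℕ) : ∀ j, bsProd V k j ⊆ bsProd U k j
  | 0 => h k
  | j + 1 => Set.mul_subset_mul (bsProd_mono h k j) (h _)

lemma bsPlus_mono (h : ∀ n, V n ⊆ U n) (k : ℕ) : bsPlus V k ⊆ bsPlus U k :=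
  Set.iUnion_mono fun j => bsProd_mono h k j

lemma bsU_mono (h : ∀ n, V n ⊆ U n) (k : ℕ) : bsU V k ⊆ bsU U k :=
  Set.mul_subset_mul (Set.inv_subset_inv.2 (bsPlus_mono h k)) (bsPlus_mono h k)

lemma bsPlus_succ_subset (h1 : ∀ n, (1:G) ∈ U n) (k : ℕ) :
    bsPlus U (k + 1) ⊆ bsPlus U k := by
  refine Set.iUnion_subset fun j => ?_
  refine subset_trans ?_ (Set.subset_iUnion (bsProd U k) (j + 1))
  rw [bsProd_cons]
  intro x hx
  simpa using Set.mul_mem_mul (h1 k) hx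

lemma bsPlus_le_subset (h1 : ∀ n, (1:G) ∈ U n) (hkj : k ≤ j) :
    bsPlus U j ⊆ bsPlus U k := by
  induction j, hkj using Nat.le_induction with
  | base => exact subset_rfl
  | succ j hkj ih => exact (bsPlus_succ_subset h1 j).trans ih

lemma bsU_le_subset (h1 : ∀ n, (1:G) ∈ U n) (hkj : k ≤ j) : bsU U j ⊆ bsU U k :=
  Set.mul_subset_mul (Set.inv_subset_inv.2 (bsPlus_le_subset h1 hkj))
    (bsPlus_le_subset h1 hkj)

lemma bsProd_conj {g : G} (h : ∀ n, n ≥ k → ∀ x ∈ W n, g * x * g⁻¹ ∈ U n) :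
    ∀ j, ∀ x ∈ bsProd W k j, g * x * g⁻¹ ∈ bsProd U k j
  | 0 => fun x hx => h k le_rfl x hx
  | j + 1 => fun x hx => by
    obtain ⟨a, ha, b, hb, rfl⟩ := hx
    have h1 : g * a * g⁻¹ ∈ bsProd U k j := bsProd_conj h j a ha
    have h2 : g * b * g⁻¹ ∈ U (k + (j+1)) := h _ (by omega) b hb
    have := Set.mul_mem_mul h1 h2
    simpa [bsProd, mul_assoc] using this

lemma bsPlus_conj {g : G} (h : ∀ n, n ≥ k → ∀ x ∈ W n, g * x * g⁻¹ ∈ U n) :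
    ∀ x ∈ bsPlus W k, g * x * g⁻¹ ∈ bsPlus U k := fun x hx => by
  obtain ⟨j, hj⟩ := Set.mem_iUnion.1 hx
  exact Set.mem_iUnion.2 ⟨j, bsProd_conj h j x hj⟩

lemma bsU_conj {g : G} (h : ∀ n, n ≥ k → ∀ x ∈ W n, g * x * g⁻¹ ∈ U n) :
    ∀ x ∈ bsU W k, g * x * g⁻¹ ∈ bsU U k := fun x hx => by
  obtain ⟨a, ha, b, hb, rfl⟩ := hx
  rw [Set.mem_inv] at ha
  have h1 : g * a⁻¹ * g⁻¹ ∈ bsPlus U k := bsPlus_conj h _ ha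
  have h2 : g * b * g⁻¹ ∈ bsPlus U k := bsPlus_conj h _ hb
  have h1' : (g * a⁻¹ * g⁻¹)⁻¹ ∈ (bsPlus U k)⁻¹ := by rwa [Set.mem_inv, inv_inv]
  have hmm := Set.mul_mem_mul h1' h2
  have heq : (g * a⁻¹ * g⁻¹)⁻¹ * (g * b * g⁻¹) = g * (a * b) * g⁻¹ := by group
  rwa [heq] at hmm

/-- membership in a in a bsU set is preserved by inversion. -/
lemma inv_mem_bsU {x : G} (hx : x ∈ bsU U k) : x⁻¹ ∈ bsU U k := by
  have h : x⁻¹ ∈ (bsU U k)⁻¹ := Set.inv_mem_inv.2 hx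
  rwa [bsU_inv] at h

end BsAux

namespace GroupTower
variable {G : Type*} [Group G] (T : GroupTower G)

lemma H_mono' : Monotone T.H := monotone_nat_of_le_succ T.mono

lemma incl_le_cont {n m : ℕ} (h : n ≤ m) :
    Continuous[T.τ n, T.τ m] (Subgroup.inclusion (T.H_mono' h)) := by
  induction m, h using Nat.le_induction with
  | base =>
    letI := T.τ n
    exact continuous_id
  | succ m hnm ih =>
    rw [continuous_def]
    intro s hs
    rw [show (⇑(Subgroup.inclusion (T.H_mono' (by omega : n ≤ m + 1))) ⁻¹' s) =
      (Subgroup.inclusion (T.H_mono' hnm)) ⁻¹'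
        ((Subgroup.inclusion (T.mono m)) ⁻¹' s) from rfl]
    exact continuous_def.mp ih _ (continuous_def.mp (T.incl_cont m) _ hs)

lemma preimage_open_of_le {n m : ℕ} (h : n ≤ m) {U : Set G}
    (hU : IsOpen[T.τ m] (((↑) : T.H m → G) ⁻¹' U)) :
    IsOpen[T.τ n] (((↑) : T.H n → G) ⁻¹' U) := by
  have heq : ((↑) : T.H n → G) ⁻¹' U =
      (Subgroup.inclusion (T.H_mono' h)) ⁻¹' (((↑) : T.H m → G) ⁻¹' U) := rfl
  rw [heq]
  exact continuous_def.mp (T.incl_le_cont h) _ hU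

lemma conj_exists {g : G} {m : ℕ} (hg : g ∈ T.H m) {U : ℕ → Set G}
    (hU : ∀ n, T.NsMem n (U n)) :
    ∃ W : ℕ → Set G, (∀ n, T.NsMem n (W n)) ∧
      ∀ n, m ≤ n → ∀ x ∈ W n, g * x * g⁻¹ ∈ U n := by
  classical
  refine ⟨fun n => if m ≤ n then U n ∩ (fun x => g * x * g⁻¹) ⁻¹' (U n) else U n,
    fun n => ?_, fun n hn x hx => ?_⟩
  · by_cases h : m ≤ n
    · simp only [if_pos h]
      obtain ⟨hsub, hopen, h1, hsymm⟩ := hU n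
      refine ⟨(Set.inter_subset_left).trans hsub, ?_, ⟨h1, by simpa using h1⟩, ?_⟩
      · letI := T.τ n
        haveI := T.topGroup n
        have hgmem : g ∈ T.H n := T.H_mono' h hg
        rw [Set.preimage_inter]
        refine IsOpen.inter hopen ?_
        have heq : ((↑) : T.H n → G) ⁻¹' ((fun x => g * x * g⁻¹) ⁻¹' (U n)) =
            (fun y : T.H n => (⟨g, hgmem⟩ : T.H n) * y * (⟨g, hgmem⟩ : T.H n)⁻¹) ⁻¹'
              (((↑) : T.H n → G) ⁻¹' (U n)) := rfl
        rw [heq]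
        exact IsOpen.preimage
          ((continuous_const.mul continuous_id).mul continuous_const) hopen
      · ext x
        simp only [Set.mem_inv, Set.mem_inter_iff, Set.mem_preimage]
        have hmem : ∀ y : G, y⁻¹ ∈ U n ↔ y ∈ U n := by
          intro y
          constructor
          · intro hy; rw [← hsymm]; simpa using hy
          · intro hy; rw [← hsymm]; simpa using hy
        have hx2 : g * x⁻¹ * g⁻¹ = (g * x * g⁻¹)⁻¹ := by group
        rw [hx2, hmem, hmem]
    · simpa [if_neg h] using hU n
  · simp only [if_pos hn] at hx
    exact hx.2

end GroupTower

/-- For any tower of topological groups: (a) every `τBS`-open set is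
`τind`-open; (b) both `(G, τind)` and `(G, τBS)` are quasitopological groups (continuous
inversion, separately continuous multiplication); (c) every open set of any group
topology making all inclusions continuous is `τBS`-open (i.e. the identity map
`(G, τBS) → glim G_n` is continuous); consequently, if `τBS` is a group topology, then
`(G, τBS) = glim G_n`. -/
theorem statement_16 {G : Type*} [Group G] (T : GroupTower G)
    (τBS : TopologicalSpace G) (hBS : T.IsBambooShoot τBS)
    (τind : TopologicalSpace G) (hind : T.IsIndTop τind) :
    (∀ A : Set G, IsOpen[τBS] A → IsOpen[τind] A) ∧
    (Continuous[τind, τind] (fun g : G => g⁻¹) ∧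
      (∀ a : G, Continuous[τind, τind] (fun g : G => a * g) ∧
        Continuous[τind, τind] (fun g : G => g * a))) ∧
    (Continuous[τBS, τBS] (fun g : G => g⁻¹) ∧
      (∀ a : G, Continuous[τBS, τBS] (fun g : G => a * g) ∧
        Continuous[τBS, τBS] (fun g : G => g * a))) ∧
    (∀ t : TopologicalSpace G, T.IsCompatGroupTopology t →
      ∀ A : Set G, IsOpen[t] A → IsOpen[τBS] A) ∧
    (@IsTopologicalGroup G τBS _ → T.IsGLim τBS) := by
  classical
  have hone : ∀ (U : ℕ → Set G), (∀ n, T.NsMem n (U n)) → ∀ n, (1:G) ∈ U n :=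
    fun U hU n => (hU n).2.2.1
  -- Part (a)
  have partA : ∀ A : Set G, IsOpen[τBS] A → IsOpen[τind] A := by
    intro A hA
    rw [hind]
    intro n
    letI := T.τ n
    haveI := T.topGroup n
    rw [isOpen_iff_forall_mem_open]
    rintro ⟨x, hxn⟩ hxA
    have hmem : A ∈ @nhds G τBS x := @IsOpen.mem_nhds G τBS x A hA hxA
    rw [(hBS x).mem_iff] at hmem
    obtain ⟨⟨U, k⟩, hU, hsub⟩ := hmem
    have hnm : n ≤ max n k := le_max_left _ _
    have hkm : k ≤ max n k := le_max_right _ _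
    obtain ⟨hUsub, hUopen, hU1, hUsymm⟩ := hU (max n k)
    have hxm : x ∈ T.H (max n k) := T.H_mono' hnm hxn
    letI := T.τ (max n k)
    haveI := T.topGroup (max n k)
    refine ⟨(fun y : T.H n => ((⟨x, hxm⟩ : T.H (max n k)))⁻¹ *
        (Subgroup.inclusion (T.H_mono' hnm) y)) ⁻¹'
        (((↑) : T.H (max n k) → G) ⁻¹' (U (max n k))), ?_, ?_, ?_⟩
    · intro y hy
      simp only [Set.mem_preimage] at hy ⊢
      have h1 : (x⁻¹ * (y : G)) ∈ U (max n k) := hy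
      have h2 : (x⁻¹ * (y : G)) ∈ bsU U k := by
        have heq : U (max n k) = U (k + (max n k - k)) := by
          rw [Nat.add_sub_cancel' hkm]
        exact subset_bsU (hone U hU) k (max n k - k) (heq ▸ h1)
      refine hsub ?_
      rw [Set.mem_smul_set_iff_inv_smul_mem, smul_eq_mul]
      exact h2
    · exact IsOpen.preimage (continuous_const.mul (T.incl_le_cont hnm)) hUopen
    · simp only [Set.mem_preimage]
      show (x⁻¹ * x : G) ∈ U (max n k)
      simpa using hU1
  -- Part (b) for τind
  have hInvInd : Continuous[τind, τind] (fun g : G => g⁻¹) := by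
    rw [continuous_def]
    intro A hA
    rw [hind] at hA ⊢
    intro n
    letI := T.τ n
    haveI := T.topGroup n
    have heq : ((↑) : T.H n → G) ⁻¹' ((fun g : G => g⁻¹) ⁻¹' A) =
        (fun y : T.H n => y⁻¹) ⁻¹' (((↑) : T.H n → G) ⁻¹' A) := rfl
    rw [heq]
    exact IsOpen.preimage continuous_inv (hA n)
  have hMulIndL : ∀ a : G, Continuous[τind, τind] (fun g : G => a * g) := by
    intro a
    obtain ⟨m, hm⟩ := T.union a
    rw [continuous_def]
    intro A hA
    rw [hind] at hA ⊢
    intro n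
    letI := T.τ n
    haveI := T.topGroup n
    letI := T.τ (max n m)
    haveI := T.topGroup (max n m)
    have ham : a ∈ T.H (max n m) := T.H_mono' (le_max_right n m) hm
    have heq : ((↑) : T.H n → G) ⁻¹' ((fun g : G => a * g) ⁻¹' A) =
        (fun y : T.H n => (⟨a, ham⟩ : T.H (max n m)) *
          Subgroup.inclusion (T.H_mono' (le_max_left n m)) y) ⁻¹'
          (((↑) : T.H (max n m) → G) ⁻¹' A) := rfl
    rw [heq]
    exact IsOpen.preimage
      (continuous_const.mul (T.incl_le_cont (le_max_left n m))) (hA (max n m))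
  have hMulIndR : ∀ a : G, Continuous[τind, τind] (fun g : G => g * a) := by
    intro a
    obtain ⟨m, hm⟩ := T.union a
    rw [continuous_def]
    intro A hA
    rw [hind] at hA ⊢
    intro n
    letI := T.τ n
    haveI := T.topGroup n
    letI := T.τ (max n m)
    haveI := T.topGroup (max n m)
    have ham : a ∈ T.H (max n m) := T.H_mono' (le_max_right n m) hm
    have heq : ((↑) : T.H n → G) ⁻¹' ((fun g : G => g * a) ⁻¹' A) =
        (fun y : T.H n => (Subgroup.inclusion (T.H_mono' (le_max_left n m)) y) *
          (⟨a, ham⟩ : T.H (max n m))) ⁻¹'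
          (((↑) : T.H (max n m) → G) ⁻¹' A) := rfl
    rw [heq]
    exact IsOpen.preimage
      ((T.incl_le_cont (le_max_left n m)).mul continuous_const) (hA (max n m))
  -- Part (b) for τBS
  have hInvBS : Continuous[τBS, τBS] (fun g : G => g⁻¹) := by
    rw [@continuous_iff_continuousAt _ _ τBS τBS]
    intro g
    refine ((hBS g).tendsto_iff (hBS g⁻¹)).mpr ?_
    rintro ⟨U, k⟩ hU
    obtain ⟨m, hgm⟩ := T.union g
    obtain ⟨W, hW, hWconj⟩ := T.conj_exists hgm hU
    refine ⟨(W, max k m), hW, ?_⟩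
    intro x hx
    rw [Set.mem_smul_set_iff_inv_smul_mem, smul_eq_mul] at hx ⊢
    rw [inv_inv]
    have hw : (g⁻¹ * x)⁻¹ ∈ bsU W (max k m) := inv_mem_bsU hx
    have hconj : g * (g⁻¹ * x)⁻¹ * g⁻¹ ∈ bsU U (max k m) :=
      bsU_conj (fun n hn => hWconj n (le_trans (le_max_right k m) hn)) _ hw
    have heq : g * (g⁻¹ * x)⁻¹ * g⁻¹ = g * x⁻¹ := by group
    rw [heq] at hconj
    exact bsU_le_subset (hone U hU) (le_max_left k m) hconj
  have hMulBSL : ∀ a : G, Continuous[τBS, τBS] (fun g : G => a * g) := by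
    intro a
    rw [@continuous_iff_continuousAt _ _ τBS τBS]
    intro g
    refine ((hBS g).tendsto_iff (hBS (a * g))).mpr ?_
    rintro ⟨U, k⟩ hU
    refine ⟨(U, k), hU, ?_⟩
    intro x hx
    rw [Set.mem_smul_set_iff_inv_smul_mem, smul_eq_mul] at hx ⊢
    have heq : (a * g)⁻¹ * (a * x) = g⁻¹ * x := by group
    rw [heq]
    exact hx
  have hMulBSR : ∀ a : G, Continuous[τBS, τBS] (fun g : G => g * a) := by
    intro a
    rw [@continuous_iff_continuousAt _ _ τBS τBS]
    intro g
    refine ((hBS g).tendsto_iff (hBS (g * a))).mpr ?_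
    rintro ⟨U, k⟩ hU
    obtain ⟨m, ham⟩ := T.union a
    have ham' : a⁻¹ ∈ T.H m := (T.H m).inv_mem ham
    obtain ⟨W, hW, hWconj⟩ := T.conj_exists ham' hU
    refine ⟨(W, max k m), hW, ?_⟩
    intro x hx
    rw [Set.mem_smul_set_iff_inv_smul_mem, smul_eq_mul] at hx ⊢
    have hconj : a⁻¹ * (g⁻¹ * x) * (a⁻¹)⁻¹ ∈ bsU U (max k m) :=
      bsU_conj (fun n hn => hWconj n (le_trans (le_max_right k m) hn)) _ hx
    have heq : a⁻¹ * (g⁻¹ * x) * (a⁻¹)⁻¹ = (g * a)⁻¹ * (x * a) := by group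
    rw [heq] at hconj
    exact bsU_le_subset (hone U hU) (le_max_left k m) hconj
  -- Part (c)
  have partC : ∀ t : TopologicalSpace G, T.IsCompatGroupTopology t →
      ∀ A : Set G, IsOpen[t] A → IsOpen[τBS] A := by
    intro t ht A hA
    obtain ⟨htg, hcont⟩ := ht
    letI := t
    haveI := htg
    rw [@isOpen_iff_mem_nhds G τBS A]
    intro x hxA
    rw [(hBS x).mem_iff]
    have hO : IsOpen (x⁻¹ • A) := hA.smul x⁻¹
    have h1O : (1:G) ∈ x⁻¹ • A := by
      rw [Set.mem_smul_set_iff_inv_smul_mem]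
      simpa using hxA
    have hstep : ∀ Wset : Set G, IsOpen Wset → (1:G) ∈ Wset →
        ∃ V : Set G, IsOpen V ∧ (1:G) ∈ V ∧ V⁻¹ = V ∧ V * V ⊆ Wset := by
      intro Wset hW h1
      obtain ⟨V0, hV0o, hV01, hV0m⟩ :=
        exists_open_nhds_one_mul_subset (hW.mem_nhds h1)
      refine ⟨V0 ∩ V0⁻¹, hV0o.inter hV0o.inv, ⟨hV01, by simpa using hV01⟩, ?_, ?_⟩
      · rw [Set.inter_inv, inv_inv, Set.inter_comm]
      · exact (Set.mul_subset_mul Set.inter_subset_left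
          Set.inter_subset_left).trans hV0m
    choose f hf1 hf2 hf3 hf4 using
      fun V : {V : Set G // IsOpen V ∧ (1:G) ∈ V} => hstep V.1 V.2.1 V.2.2
    obtain ⟨V0, hV0o, hV01, hV0s, hV0m⟩ := hstep (x⁻¹ • A) hO h1O
    let F : ℕ → {V : Set G // IsOpen V ∧ (1:G) ∈ V} := fun n =>
      Nat.rec ⟨V0, hV0o, hV01⟩ (fun _ p => ⟨f p, hf1 p, hf2 p⟩) n
    let S : ℕ → Set G := fun n => (F n).1
    have hS0 : S 0 = V0 := rfl
    have hSopen : ∀ n, IsOpen (S n) := fun n => (F n).2.1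
    have hS1 : ∀ n, (1:G) ∈ S n := fun n => (F n).2.2
    have hSsymm : ∀ n, (S n)⁻¹ = S n := by
      intro n
      cases n with
      | zero => exact hV0s
      | succ p => exact hf3 (F p)
    have hSmul : ∀ n, S (n+1) * S (n+1) ⊆ S n := fun n => hf4 (F n)
    have hSmono : ∀ n, S (n+1) ⊆ S n := by
      intro n y hy
      have := Set.mul_mem_mul hy (hS1 (n+1))
      rw [mul_one] at this
      exact hSmul n this
    have hclaim : ∀ j k, bsProd (fun n => S (n+1)) k j ⊆ S k := by
      intro j
      induction j with
      | zero => exact fun k => hSmono k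
      | succ j ih =>
        intro k
        rw [bsProd_cons]
        exact (Set.mul_subset_mul subset_rfl (ih (k+1))).trans (hSmul k)
    refine ⟨(fun n => S (n+1) ∩ (T.H n : Set G), 0), ?_, ?_⟩
    · intro n
      refine ⟨Set.inter_subset_right, ?_, ⟨hS1 (n+1), (T.H n).one_mem⟩, ?_⟩
      · have heq : ((↑) : T.H n → G) ⁻¹' (S (n+1) ∩ (T.H n : Set G)) =
            ((↑) : T.H n → G) ⁻¹' (S (n+1)) := by
          ext y
          simp [y.2]
        rw [heq]
        exact continuous_def.mp (hcont n) _ (hSopen (n+1))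
      · ext z
        simp only [Set.mem_inv, Set.mem_inter_iff, SetLike.mem_coe]
        have hz1 : z⁻¹ ∈ S (n+1) ↔ z ∈ S (n+1) := by
          constructor
          · intro hz; rw [← hSsymm (n+1)]; simpa using hz
          · intro hz; rw [← hSsymm (n+1)]; simpa using hz
        rw [hz1, inv_mem_iff]
    · have hPlus : bsPlus (fun n => S (n+1) ∩ (T.H n : Set G)) 0 ⊆ S 0 :=
        Set.iUnion_subset fun j =>
          (bsProd_mono (fun n => Set.inter_subset_left) 0 j).trans (hclaim j 0)
      have hbsU : bsU (fun n => S (n+1) ∩ (T.H n : Set G)) 0 ⊆ x⁻¹ • A := by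
        refine subset_trans ?_ (hS0 ▸ hV0m)
        refine subset_trans (Set.mul_subset_mul (Set.inv_subset_inv.2 hPlus) hPlus) ?_
        rw [hSsymm 0]
      intro y hy
      rw [Set.mem_smul_set_iff_inv_smul_mem] at hy
      have := hbsU hy
      rwa [Set.smul_mem_smul_set_iff] at this
  refine ⟨partA, ⟨hInvInd, fun a => ⟨hMulIndL a, hMulIndR a⟩⟩,
    ⟨hInvBS, fun a => ⟨hMulBSL a, hMulBSR a⟩⟩, partC, ?_⟩
  intro hTG
  refine ⟨⟨hTG, fun n => ?_⟩, partC⟩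
  rw [continuous_def]
  intro A hA
  exact (hind A).mp (partA A hA) n
end

section
/- Let X be a Tychonoff space. Assume X admits a family U = {U_i : i ∈ I} of open subsets of X, a subset A = {a_i : i ∈ I} ⊆ X, and a point z ∈ X such that: (i) a_i ∈ U_i for every i ∈ I; (ii) for every compact subset C of X, the set {i ∈ I : C ∩ U_i ≠ ∅} is finite; and (iii) z is a cluster point of A, i.e., every neighborhood of z contains a point of A different from z. Then X is not an Ascoli space. -/
open Topology Filter Set

/-- A Tychonoff space admitting a family `{U i}` of open sets, points
`a i ∈ U i`, such that every compact set meets only finitely many `U i`, and a cluster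
point `z` of `{a i}`, is not an Ascoli space. -/
theorem statement_18 {X : Type*} [TopologicalSpace X] [T35Space X]
    {I : Type*} (U : I → Set X) (a : I → X) (z : X)
    (hopen : ∀ i, IsOpen (U i))
    (hmem : ∀ i, a i ∈ U i)
    (hfin : ∀ C : Set X, IsCompact C → {i : I | (C ∩ U i).Nonempty}.Finite)
    (hz : ∀ V ∈ 𝓝 z, ∃ i, a i ∈ V ∧ a i ≠ z) :
    ¬ IsAscoliSpace X := by
  classical
  intro hA
  -- Construct bump functions
  have key : ∀ i, a i ≠ z → ∃ g : C(X, ℝ),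
      g (a i) = 1 ∧ g z = 0 ∧ ∀ x, x ∉ U i → g x = 0 := by
    intro i hne
    have hK : IsClosed ({z} ∪ (U i)ᶜ) :=
      isClosed_singleton.union (hopen i).isClosed_compl
    have hmemK : a i ∉ ({z} ∪ (U i)ᶜ) := by
      simp only [mem_union, mem_singleton_iff, mem_compl_iff, not_or, not_not]
      exact ⟨hne, hmem i⟩
    obtain ⟨f, hfc, hf0, hf1⟩ :=
      CompletelyRegularSpace.completely_regular (a i) _ hK hmemK
    refine ⟨⟨fun x => 1 - (f x : ℝ), by fun_prop⟩, ?_, ?_, ?_⟩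
    · simp [hf0]
    · have : f z = 1 := hf1 (Or.inl rfl)
      simp [this]
    · intro x hx
      have : f x = 1 := hf1 (Or.inr hx)
      simp [this]
  choose g hg1 hg2 hg3 using key
  let G : I → C(X, ℝ) := fun i => if h : a i ≠ z then g i h else 0
  letI : TopologicalSpace I := ⊥
  haveI : DiscreteTopology I := ⟨rfl⟩
  let F : OnePoint I → C(X, ℝ) := fun o => o.elim 0 G
  have hFc : Continuous F := by
    rw [OnePoint.continuous_iff_from_discrete]
    show Tendsto G cofinite (𝓝 0)
    rw [ContinuousMap.tendsto_compactOpen_iff_forall]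
    intro K hK
    refine Tendsto.congr' ?_ tendsto_const_nhds
    have : {i : I | (K ∩ U i).Nonempty}ᶜ ∈ (cofinite : Filter I) := by
      rw [mem_cofinite, compl_compl]
      exact hfin K hK
    filter_upwards [this] with i hi
    ext x
    have hx : (x : X) ∉ U i := fun hxu => hi ⟨x, x.2, hxu⟩
    simp only [ContinuousMap.restrict_apply]
    by_cases h : a i ≠ z
    · simp [G, h, hg3 i h x hx]
    · rw [not_not] at h; simp [G, h]
  have hcpt : IsCompact (Set.range F) := isCompact_range hFc
  have hequi := hA (Set.range F) hcpt z
  rw [Metric.equicontinuousAt_iff_right] at hequi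
  obtain ⟨V, hVmem, hV⟩ := (hequi (1/2) (by norm_num)).exists_mem
  obtain ⟨i, hiV, hine⟩ := hz V hVmem
  have hmemF : G i ∈ Set.range F := ⟨(i : OnePoint I), rfl⟩
  have := hV (a i) hiV ⟨G i, hmemF⟩
  simp only [G, dif_pos hine] at this
  rw [hg2 i hine, hg1 i hine] at this
  norm_num at this
end

section
/- If a Hausdorff topological group G is an MK_ω-space, then G is either a locally compact metrizable group or a sequential space that is not Fréchet–Urysohn. -/
open Topology Filter Set

/-- Pigeonhole: a bounded sequence of naturals has an infinite fiber. -/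
lemma aux_pigeon (f : ℕ → ℕ) (B : ℕ) (hf : ∀ k, f k ≤ B) :
    ∃ i, {k | f k = i}.Infinite := by
  by_contra hcon
  push_neg at hcon
  have hfin : (Set.univ : Set ℕ).Finite := by
    have hsub : (Set.univ : Set ℕ) ⊆ ⋃ i ∈ Finset.range (B + 1), {k | f k = i} := by
      intro k _
      exact Set.mem_biUnion (Finset.mem_range.2 (Nat.lt_succ_of_le (hf k))) rfl
    exact Set.Finite.subset (Set.Finite.biUnion (Finset.range (B + 1)).finite_toSet
      fun i _ => hcon i) hsub
  exact Set.infinite_univ hfin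

/-- An unbounded sequence of naturals is frequently large. -/
lemma aux_freq (f : ℕ → ℕ) (hf : ∀ B, ∃ k, B < f k) (B : ℕ) :
    ∃ᶠ k in atTop, B ≤ f k := by
  rw [Filter.frequently_atTop]
  intro K
  obtain ⟨k, hk⟩ := hf (max B ((Finset.range (K + 1)).sup f))
  refine ⟨k, ?_, le_trans (le_max_left _ _) hk.le⟩
  by_contra hkK
  push_neg at hkK
  have hle : f k ≤ (Finset.range (K + 1)).sup f :=
    Finset.le_sup (Finset.mem_range.2 (by omega))
  have := le_max_right B ((Finset.range (K + 1)).sup f)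
  omega

/-- A Hausdorff topological group which is an MK_ω-space is either a
locally compact metrizable group or a sequential space that is not Fréchet–Urysohn. -/
theorem statement_19 {G : Type*} [Group G] [TopologicalSpace G] [IsTopologicalGroup G]
    [T2Space G] (h : IsMKOmegaSpace G) :
    (LocallyCompactSpace G ∧ TopologicalSpace.MetrizableSpace G) ∨
      (SequentialSpace G ∧ ¬ FrechetUrysohnSpace G) := by
  classical
  obtain ⟨K, hKc, hKm, hKsucc, hKcov, hKcl⟩ := h
  have hmono : Monotone K := monotone_nat_of_le_succ hKsucc
  by_cases hint : ∃ n, (interior (K n)).Nonempty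
  · -- locally compact metrizable case
    left
    obtain ⟨N, y, hy⟩ := hint
    have hLC : LocallyCompactSpace G :=
      (hKc N).locallyCompactSpace_of_mem_nhds_of_group (mem_interior_iff_mem_nhds.1 hy)
    refine ⟨hLC, ?_⟩
    haveI : FirstCountableTopology G := by
      constructor
      intro x
      set e : G ≃ₜ G := Homeomorph.mulLeft (x * y⁻¹) with he
      haveI : TopologicalSpace.MetrizableSpace (e '' K N) := by
        haveI := hKm N
        exact ((Homeomorph.image e (K N)).symm.isEmbedding).metrizableSpace
      have hCx : e '' K N ∈ 𝓝 x := by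
        have hopen : IsOpen (e '' interior (K N)) := (Homeomorph.isOpen_image e).2 isOpen_interior
        have hxmem : x ∈ e '' interior (K N) := ⟨y, hy, by simp [he]⟩
        exact mem_nhds_iff.2 ⟨e '' interior (K N), Set.image_mono interior_subset,
          hopen, hxmem⟩
      have hxC : x ∈ e '' K N := mem_of_mem_nhds hCx
      have h1 : 𝓝 x = map (Subtype.val : (e '' K N) → G) (𝓝 (⟨x, hxC⟩ : e '' K N)) := by
        rw [map_nhds_subtype_val, nhdsWithin_eq_nhds.2 hCx]
      rw [h1]
      exact Filter.map.isCountablyGenerated _ _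
    letI U : UniformSpace G := IsTopologicalGroup.rightUniformSpace G
    haveI : (uniformity G).IsCountablyGenerated := by
      show (comap (fun p : G × G => p.2 * p.1⁻¹) (𝓝 1)).IsCountablyGenerated
      exact Filter.comap.isCountablyGenerated _ _
    exact UniformSpace.metrizableSpace
  · -- sequential, not Fréchet–Urysohn case
    right
    push_neg at hint
    have hKint : ∀ n, interior (K n) = ∅ := hint
    have hseq : SequentialSpace G := by
      constructor
      intro A hA
      rw [hKcl]
      intro n
      haveI := hKm n
      apply IsSeqClosed.isClosed
      intro u p hu hup
      have hup' : Tendsto (fun k => (u k : G)) atTop (𝓝 (p : G)) :=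
        (continuous_subtype_val.tendsto p).comp hup
      exact hA hu hup'
    refine ⟨hseq, ?_⟩
    intro hFU
    haveI := hFU
    obtain ⟨N, hN⟩ : ∃ N, (1 : G) ∈ K N := by
      have h1 : (1 : G) ∈ ⋃ n, K n := hKcov ▸ Set.mem_univ 1
      exact Set.mem_iUnion.1 h1
    set L : ℕ → Set G := fun n => K (n + N) with hLdef
    have hLmono : ∀ {i j : ℕ}, i ≤ j → L i ⊆ L j := fun hij => hmono (by omega)
    have hL1 : ∀ n, (1 : G) ∈ L n := fun n => hmono (Nat.le_add_left N n) hN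
    have hcl : ∀ n, (1 : G) ∈ closure (L n)ᶜ := by
      intro n
      rw [closure_compl]
      have hi : interior (L n) = ∅ := hKint (n + N)
      rw [hi, Set.compl_empty]
      exact Set.mem_univ _
    have hx : ∀ n, ∃ u : ℕ → G, (∀ m, u m ∈ (L n)ᶜ) ∧ Tendsto u atTop (𝓝 1) :=
      fun n => mem_closure_iff_seq_limit.1 (hcl n)
    choose x hxmem hxlim using hx
    have h1L0 : (1 : G) ∉ (L 0)ᶜ := fun hc => hc (hL1 0)
    set t : ℕ → G := x 0 with htdef
    have htne : ∀ n, t n ≠ 1 := fun n h1 => h1L0 (h1 ▸ hxmem 0 n)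
    have hc : ∀ n, ∃ c, ∀ m, c ≤ m → x n m ≠ (t n)⁻¹ := by
      intro n
      by_contra hcon
      push_neg at hcon
      have hfreq : ∃ᶠ m in atTop, x n m = (t n)⁻¹ := by
        rw [Filter.frequently_atTop]
        intro K0
        obtain ⟨mm, hm1, hm2⟩ := hcon K0
        exact ⟨mm, hm1, hm2⟩
      have h1 : (1 : G) = (t n)⁻¹ :=
        tendsto_nhds_unique_of_frequently_eq (hxlim n) tendsto_const_nhds hfreq
      exact htne n (by rw [← inv_inv (t n), ← h1, inv_one])
    choose c hc using hc
    set y : ℕ → ℕ → G := fun n m => x n (m + c n) with hydef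
    have hymem : ∀ n m, y n m ∈ (L n)ᶜ := fun n m => hxmem n _
    have hylim : ∀ n, Tendsto (y n) atTop (𝓝 1) :=
      fun n => (hxlim n).comp (tendsto_add_atTop_nat (c n))
    have hyne : ∀ n m, y n m ≠ (t n)⁻¹ := fun n m => hc n _ (Nat.le_add_left _ _)
    set D : Set G := {g | ∃ n m, g = t n * y n m} with hDdef
    have h1D : (1 : G) ∈ closure D := by
      have htD : ∀ n, t n ∈ closure D := by
        intro n
        have htend : Tendsto (fun m => t n * y n m) atTop (𝓝 (t n)) := by
          have h0 : Tendsto (fun m => t n * y n m) atTop (𝓝 (t n * 1)) :=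
            Tendsto.mul tendsto_const_nhds (hylim n)
          simpa using h0
        exact mem_closure_of_tendsto htend
          (Filter.Eventually.of_forall fun m => ⟨n, m, rfl⟩)
      have hsub : Set.range t ⊆ closure D := Set.range_subset_iff.2 htD
      have hmem : (1 : G) ∈ closure (Set.range t) :=
        mem_closure_of_tendsto (hxlim 0)
          (Filter.Eventually.of_forall fun m => Set.mem_range_self m)
      exact closure_minimal hsub isClosed_closure hmem
    obtain ⟨w, hwD, hwlim⟩ := mem_closure_iff_seq_limit.1 h1D
    simp only [hDdef, Set.mem_setOf_eq] at hwD
    choose n m hw using hwD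
    by_cases hb : ∃ B, ∀ k, n k ≤ B
    · -- bounded case: contradiction
      obtain ⟨B, hB⟩ := hb
      obtain ⟨n0, hn0⟩ := aux_pigeon n B hB
      have hfreq : ∃ᶠ k in atTop, n k = n0 := Nat.frequently_atTop_iff_infinite.2 hn0
      obtain ⟨φ, hφmono, hφ⟩ := Filter.extraction_of_frequently_atTop hfreq
      have hv : Tendsto (fun k => (t n0)⁻¹ * w (φ k)) atTop (𝓝 ((t n0)⁻¹)) := by
        have h0 : Tendsto (fun k => (t n0)⁻¹ * w (φ k)) atTop (𝓝 ((t n0)⁻¹ * 1)) :=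
          Tendsto.mul tendsto_const_nhds (hwlim.comp hφmono.tendsto_atTop)
        simpa using h0
      have hveq : ∀ k, (t n0)⁻¹ * w (φ k) = y n0 (m (φ k)) := by
        intro k
        rw [hw (φ k), hφ k, inv_mul_cancel_left]
      by_cases hmb : ∃ M, ∀ k, m (φ k) ≤ M
      · obtain ⟨M, hM⟩ := hmb
        obtain ⟨i0, hi0⟩ := aux_pigeon (fun k => m (φ k)) M hM
        have hfreq2 : ∃ᶠ k in atTop, (t n0)⁻¹ * w (φ k) = y n0 i0 := by
          have hh := Nat.frequently_atTop_iff_infinite.2 hi0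
          exact hh.mono fun k hk => by rw [hveq k, hk]
        have heq : (t n0)⁻¹ = y n0 i0 :=
          tendsto_nhds_unique_of_frequently_eq hv tendsto_const_nhds hfreq2
        exact hyne n0 i0 heq.symm
      · push_neg at hmb
        have hfr : ∀ B', ∃ᶠ k in atTop, B' ≤ m (φ k) := aux_freq _ hmb
        obtain ⟨ψ, hψmono, hψ⟩ := Filter.extraction_forall_of_frequently hfr
        have hmt : Tendsto (fun j => m (φ (ψ j))) atTop atTop :=
          tendsto_atTop_mono hψ tendsto_id
        have h1 : Tendsto (fun j => y n0 (m (φ (ψ j)))) atTop (𝓝 1) := (hylim n0).comp hmt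
        have h2 : Tendsto (fun j => y n0 (m (φ (ψ j)))) atTop (𝓝 ((t n0)⁻¹)) := by
          have := hv.comp hψmono.tendsto_atTop
          exact this.congr fun j => hveq (ψ j)
        have heq : (1 : G) = (t n0)⁻¹ := tendsto_nhds_unique h1 h2
        exact htne n0 (by rw [← inv_inv (t n0), ← heq, inv_one])
    · -- unbounded case: contradiction
      push_neg at hb
      have hfr : ∀ B, ∃ᶠ k in atTop, B ≤ n k := aux_freq n hb
      obtain ⟨φ, hφmono, hφ⟩ := Filter.extraction_forall_of_frequently hfr
      set a : ℕ → G := fun j => y (n (φ j)) (m (φ j)) with hadef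
      have haeq : ∀ j, a j = (t (n (φ j)))⁻¹ * w (φ j) := by
        intro j
        show y (n (φ j)) (m (φ j)) = (t (n (φ j)))⁻¹ * w (φ j)
        rw [hw (φ j), inv_mul_cancel_left]
      have hnt : Tendsto (fun j => n (φ j)) atTop atTop := tendsto_atTop_mono hφ tendsto_id
      have halim : Tendsto a atTop (𝓝 1) := by
        have h1 : Tendsto (fun j => (t (n (φ j)))⁻¹) atTop (𝓝 1) := by
          have := ((hxlim 0).comp hnt).inv
          simpa using this
        have h2 := h1.mul (hwlim.comp hφmono.tendsto_atTop)
        rw [one_mul] at h2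
        exact h2.congr fun j => (haeq j).symm
      have hanot : ∀ j, a j ∉ L j :=
        fun j hj => hymem (n (φ j)) (m (φ j)) (hLmono (hφ j) hj)
      have hane : ∀ j, a j ≠ 1 := fun j h1 => hanot j (h1 ▸ hL1 j)
      have hSclosed : IsClosed (Set.range a) := by
        rw [hKcl]
        intro q
        have key : ∀ j, q ≤ j → a j ∉ K q := by
          intro j hqj hj
          exact hanot j (hmono (by omega : q ≤ j + N) hj)
        have hfin : ((Subtype.val : K q → G) ⁻¹' Set.range a).Finite := by
          have hsub : ((Subtype.val : K q → G) ⁻¹' Set.range a) ⊆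
              (Subtype.val : K q → G) ⁻¹' (a '' Set.Iio q) := by
            rintro ⟨z, hz⟩ ⟨j, hj⟩
            refine ⟨j, ?_, hj⟩
            simp only [Set.mem_Iio]
            by_contra hjq
            exact key j (by omega) (by rw [hj]; exact hz)
          exact (((Set.finite_Iio q).image a).preimage Subtype.val_injective.injOn).subset hsub
        exact hfin.isClosed
      have h1S : (1 : G) ∈ Set.range a :=
        hSclosed.mem_of_tendsto halim
          (Filter.Eventually.of_forall fun j => Set.mem_range_self j)
      obtain ⟨j, hj⟩ := h1S
      exact hane j hj
end
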